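/- Consequence of precision: if two regular expressions p and p' over alphabet E recognize the same language, then for any interpretation into a quantale, I[p] = I[p']. -/

import Mathlib

/-- A quantale: a complete lattice with a monoid operation distributing over
arbitrary suprema in both arguments. -/
structure Quantale' (K : Type*) [CompleteLattice K] where
  mul : K → K → K
  one : K
  mul_assoc : ∀ a b c, mul (mul a b) c = mul a (mul b c)
  one_mul : ∀ a, mul one a = a
  mul_one : ∀ a, mul a one = a
  mul_sSup : ∀ (a : K) (S : Set K), mul a (sSup S) = sSup (Set.image (mul a) S)
  sSup_mul : ∀ (a : K) (S : Set K), mul (sSup S) a = sSup (Set.image (fun b => mul b a) S)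

/-- n-fold product in a quantale: `a^0 = 1`, `a^(n+1) = a^n ⊙ a`. -/
def Quantale'.pow {K : Type*} [CompleteLattice K] (Q : Quantale' K) (a : K) : ℕ → K
  | 0 => Q.one
  | n + 1 => Q.mul (Q.pow a n) a

/-- Iteration: `a⋆ = sup_{n ∈ ℕ} a^n`. -/
def Quantale'.star {K : Type*} [CompleteLattice K] (Q : Quantale' K) (a : K) : K :=
  ⨆ n, Q.pow a n

/-- Regular expressions over alphabet `E`. -/
inductive RegExp (E : Type*) where
  | zero : RegExp E
  | eps : RegExp E
  | char : E → RegExp E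
  | plus : RegExp E → RegExp E → RegExp E
  | cat : RegExp E → RegExp E → RegExp E
  | star : RegExp E → RegExp E

/-- The language of a regular expression. -/
def RegExp.lang {E : Type*} : RegExp E → Language E
  | .zero => 0
  | .eps => 1
  | .char e => {[e]}
  | .plus p q => p.lang + q.lang
  | .cat p q => p.lang * q.lang
  | .star p => KStar.kstar p.lang

/-- Interpretation of a regular expression in a quantale. -/
def Quantale'.interp {K : Type*} [CompleteLattice K] {E : Type*} (Q : Quantale' K)
    (sem : E → K) : RegExp E → K
  | .zero => ⊥
  | .eps => Q.one
  | .char e => sem e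
  | .plus p q => Q.interp sem p ⊔ Q.interp sem q
  | .cat p q => Q.mul (Q.interp sem p) (Q.interp sem q)
  | .star p => Q.star (Q.interp sem p)

/-- Interpretation of a word: `sem e₁ ⊙ ⋯ ⊙ sem eₙ` (the empty word is `1`). -/
def Quantale'.semWord {K : Type*} [CompleteLattice K] {E : Type*} (Q : Quantale' K)
    (sem : E → K) (w : List E) : K :=
  w.foldr (fun e k => Q.mul (sem e) k) Q.one

/-!
`I[p]` is the join of `I[w]` over the words `w` of `p.lang`. Indeed the map `L ↦ ⨆ w ∈ L, I[w]`
on languages sends unions to joins, concatenation to `⊙` (which distributes over arbitrary joins),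
and hence `L∗ = ⨆ n, Lⁿ` to `a⋆ = ⨆ n, aⁿ`; by induction on `p` it agrees with `I` on `p.lang`.
-/

namespace Quantale'

variable {K : Type*} [CompleteLattice K] {E : Type*} (Q : Quantale' K) (sem : E → K)

theorem mul_iSup {ι : Sort*} (a : K) (f : ι → K) : Q.mul a (⨆ i, f i) = ⨆ i, Q.mul a (f i) := by
  rw [iSup, Q.mul_sSup, ← Set.range_comp, iSup]
  rfl

theorem iSup_mul {ι : Sort*} (f : ι → K) (a : K) : Q.mul (⨆ i, f i) a = ⨆ i, Q.mul (f i) a := by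
  rw [iSup, Q.sSup_mul, ← Set.range_comp, iSup]
  rfl

theorem semWord_nil : Q.semWord sem [] = Q.one := rfl

theorem semWord_singleton (e : E) : Q.semWord sem [e] = sem e := Q.mul_one _

theorem semWord_append (u v : List E) :
    Q.semWord sem (u ++ v) = Q.mul (Q.semWord sem u) (Q.semWord sem v) := by
  induction u with
  | nil => exact (Q.one_mul _).symm
  | cons e u ih =>
    simp only [semWord, List.cons_append, List.foldr_cons] at ih ⊢
    rw [ih, Q.mul_assoc]

def langInterp (L : Language E) : K :=
  ⨆ w ∈ L, Q.semWord sem w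

theorem langInterp_zero : Q.langInterp sem 0 = ⊥ := by
  simp [langInterp, Language.notMem_zero]

theorem langInterp_one : Q.langInterp sem 1 = Q.one := by
  simp [langInterp, Language.mem_one, semWord_nil]

theorem langInterp_singleton (w : List E) : Q.langInterp sem {w} = Q.semWord sem w :=
  iSup_iSup_eq_left

theorem langInterp_add (L M : Language E) :
    Q.langInterp sem (L + M) = Q.langInterp sem L ⊔ Q.langInterp sem M := by
  simp only [langInterp, Language.mem_add, iSup_or, iSup_sup_eq]

theorem langInterp_mul (L M : Language E) :
    Q.langInterp sem (L * M) = Q.mul (Q.langInterp sem L) (Q.langInterp sem M) := by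
  calc Q.langInterp sem (L * M) = ⨆ u ∈ L, ⨆ v ∈ M, Q.semWord sem (u ++ v) :=
        iSup_image2 _ _ _ _
    _ = _ := by simp only [langInterp, semWord_append, iSup_mul]; simp only [mul_iSup]

theorem langInterp_pow (L : Language E) (n : ℕ) :
    Q.langInterp sem (L ^ n) = Q.pow (Q.langInterp sem L) n := by
  induction n with
  | zero => exact Q.langInterp_one sem
  | succ n ih => rw [pow_succ, langInterp_mul, ih]; rfl

theorem langInterp_iSup {ι : Sort*} (L : ι → Language E) :
    Q.langInterp sem (⨆ i, L i) = ⨆ i, Q.langInterp sem (L i) := by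
  simp only [langInterp, Language.mem_iSup, iSup_exists]
  exact iSup_comm

theorem langInterp_kstar (L : Language E) :
    Q.langInterp sem (KStar.kstar L) = Q.star (Q.langInterp sem L) := by
  simp only [Language.kstar_eq_iSup_pow, langInterp_iSup, langInterp_pow, star]

theorem langInterp_lang (p : RegExp E) : Q.langInterp sem p.lang = Q.interp sem p := by
  induction p with
  | zero => exact Q.langInterp_zero sem
  | eps => exact Q.langInterp_one sem
  | char e => exact (Q.langInterp_singleton sem [e]).trans (Q.semWord_singleton sem e)
  | plus p q ihp ihq => rw [RegExp.lang, langInterp_add, ihp, ihq, interp]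
  | cat p q ihp ihq => rw [RegExp.lang, langInterp_mul, ihp, ihq, interp]
  | star p ih => rw [RegExp.lang, langInterp_kstar, ih, interp]

end Quantale'

/-- If two regular expressions recognize the same language, their interpretations
in any quantale coincide. -/
theorem quantale_lang_eq_interp_eq {K : Type*} [CompleteLattice K] {E : Type*}
    (Q : Quantale' K) (sem : E → K) (p p' : RegExp E) (h : p.lang = p'.lang) :
    Q.interp sem p = Q.interp sem p' := by
  rw [← Q.langInterp_lang sem p, ← Q.langInterp_lang sem p', h]
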